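/- arXiv:1303.1374 — 12 statements merged into one kernel-verified Lean document; each statement's English description precedes it below -/
import Mathlib

section
/- Assume α₁>0>α₂, β₁>0>β₂, β₁>α₁, θ := α₁β₂ − α₂β₁ > 0, and m₁, m₂ > 0. Define σₖ = mₖ/αₖ and τₖ = mₖ/βₖ. Then σ₁+σ₂ ≥ 0 implies τ₁+τ₂ < σ₁+σ₂, and σ₁+σ₂ < 0 implies τ₁+τ₂ < 0. -/
/-! The `m₁`-terms cancel in `τ₁ + τ₂ - (α₁/β₁)(σ₁ + σ₂) = -m₂ θ / (α₂ β₁ β₂)`, which is negative,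
so `τ₁ + τ₂ < (α₁/β₁)(σ₁ + σ₂)`. Since `0 < α₁/β₁ < 1`, the right side is at most `σ₁ + σ₂`
when `σ₁ + σ₂ ≥ 0` and negative when `σ₁ + σ₂ < 0`. -/

lemma sum_div_sub_div_mul_sum_div {α₁ α₂ β₁ β₂ : ℝ} (m₁ m₂ : ℝ) (hα₁ : α₁ ≠ 0) (hα₂ : α₂ ≠ 0)
    (hβ₁ : β₁ ≠ 0) (hβ₂ : β₂ ≠ 0) :
    m₁ / β₁ + m₂ / β₂ - α₁ / β₁ * (m₁ / α₁ + m₂ / α₂) =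
      -(m₂ * (α₁ * β₂ - α₂ * β₁)) / (α₂ * β₁ * β₂) := by
  field_simp
  ring

lemma sum_div_lt_div_mul_sum_div {α₁ α₂ β₁ β₂ m₂ : ℝ} (m₁ : ℝ) (hα₁ : α₁ ≠ 0) (hα₂ : α₂ < 0)
    (hβ₁ : 0 < β₁) (hβ₂ : β₂ < 0) (hθ : 0 < α₁ * β₂ - α₂ * β₁) (hm₂ : 0 < m₂) :
    m₁ / β₁ + m₂ / β₂ < α₁ / β₁ * (m₁ / α₁ + m₂ / α₂) := by
  have hden : α₂ * β₁ * β₂ > 0 := mul_pos_of_neg_of_neg (mul_neg_of_neg_of_pos hα₂ hβ₁) hβ₂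
  have hdiff := sum_div_sub_div_mul_sum_div m₁ m₂ hα₁ hα₂.ne hβ₁.ne' hβ₂.ne
  have : -(m₂ * (α₁ * β₂ - α₂ * β₁)) / (α₂ * β₁ * β₂) < 0 :=
    div_neg_of_neg_of_pos (neg_neg_of_pos (mul_pos hm₂ hθ)) hden
  linarith

theorem stmt_1_general (α₁ α₂ β₁ β₂ m₁ m₂ : ℝ)
    (hα : α₁ > 0 ∧ 0 > α₂) (hβ : β₁ > 0 ∧ 0 > β₂)
    (hba : β₁ > α₁) (hθ : α₁ * β₂ - α₂ * β₁ > 0)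
    (hm₂ : m₂ > 0) :
    (m₁ / α₁ + m₂ / α₂ ≥ 0 → m₁ / β₁ + m₂ / β₂ < m₁ / α₁ + m₂ / α₂) ∧
    (m₁ / α₁ + m₂ / α₂ < 0 → m₁ / β₁ + m₂ / β₂ < 0) := by
  obtain ⟨hα₁, hα₂⟩ := hα
  obtain ⟨hβ₁, hβ₂⟩ := hβ
  have key := sum_div_lt_div_mul_sum_div m₁ hα₁.ne' hα₂ hβ₁ hβ₂ hθ hm₂
  have hratio_pos : 0 < α₁ / β₁ := div_pos hα₁ hβ₁
  have hratio_le_one : α₁ / β₁ ≤ 1 := (div_le_one hβ₁).2 hba.le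
  exact ⟨fun hσ => key.trans_le (mul_le_of_le_one_left hσ hratio_le_one),
    fun hσ => key.trans (mul_neg_of_pos_of_neg hratio_pos hσ)⟩

theorem stmt_1 (α₁ α₂ β₁ β₂ m₁ m₂ : ℝ)
    (hα : α₁ > 0 ∧ 0 > α₂) (hβ : β₁ > 0 ∧ 0 > β₂)
    (hba : β₁ > α₁) (hθ : α₁ * β₂ - α₂ * β₁ > 0)
    (hm₁ : m₁ > 0) (hm₂ : m₂ > 0) :
    (m₁ / α₁ + m₂ / α₂ ≥ 0 → m₁ / β₁ + m₂ / β₂ < m₁ / α₁ + m₂ / α₂) ∧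
    (m₁ / α₁ + m₂ / α₂ < 0 → m₁ / β₁ + m₂ / β₂ < 0) :=
  stmt_1_general α₁ α₂ β₁ β₂ m₁ m₂ hα hβ hba hθ hm₂
end

section
/- Let α₁>0>α₂ and m₁, m₂ > 0, and set σₖ = mₖ/αₖ. If |σ₁+σ₂| < 1 then the numbers p̂₁ = (1 − 2σ₁ + √(1−4σ₁σ₂))/2 and p̂₂ = (1 − 2σ₂ − √(1−4σ₁σ₂))/2 satisfy 0 < p̂₂ < p̂₁ < 1, i.e. they are admissible allele frequencies. -/
/-!
Write `D = 1 - 4σ₁σ₂`. The identities `D - (σ₁ - σ₂)² = 1 - (σ₁ + σ₂)²`,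
`(1 - 2σ₂)² - D = 4σ₂(σ₁ + σ₂ - 1)` and `(1 + 2σ₁)² - D = 4σ₁(1 + σ₁ + σ₂)` show that
`|σ₁ + σ₂| < 1` together with `σ₁ > 0 > σ₂` gives `σ₁ - σ₂ < √D < min (1 - 2σ₂) (1 + 2σ₁)`,
which are exactly `p̂₂ < p̂₁`, `0 < p̂₂` and `p̂₁ < 1`.
-/

namespace Real

variable {a b : ℝ}

theorem sub_lt_sqrt_one_sub_four_mul_mul (h : |a + b| < 1) :
    a - b < √(1 - 4 * a * b) := by
  apply lt_sqrt_of_sq_lt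
  nlinarith [sq_abs (a + b), abs_nonneg (a + b)]

theorem sqrt_one_sub_four_mul_mul_lt_one_sub_two_mul (hb : b < 0) (h : a + b < 1) :
    √(1 - 4 * a * b) < 1 - 2 * b := by
  rw [sqrt_lt' (by linarith)]
  nlinarith [mul_pos_of_neg_of_neg hb (sub_neg.mpr h)]

theorem sqrt_one_sub_four_mul_mul_lt_one_add_two_mul (ha : 0 < a) (h : -1 < a + b) :
    √(1 - 4 * a * b) < 1 + 2 * a := by
  convert sqrt_one_sub_four_mul_mul_lt_one_sub_two_mul (a := -b) (b := -a) (by linarith)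
    (by linarith) using 2 <;> ring

end Real

theorem stmt_2 (α₁ α₂ m₁ m₂ : ℝ)
    (hα : α₁ > 0 ∧ 0 > α₂) (hm₁ : m₁ > 0) (hm₂ : m₂ > 0)
    (hσ : |m₁ / α₁ + m₂ / α₂| < 1) :
    0 < (1 - 2 * (m₂ / α₂) - Real.sqrt (1 - 4 * (m₁ / α₁) * (m₂ / α₂))) / 2 ∧
    (1 - 2 * (m₂ / α₂) - Real.sqrt (1 - 4 * (m₁ / α₁) * (m₂ / α₂))) / 2 <
      (1 - 2 * (m₁ / α₁) + Real.sqrt (1 - 4 * (m₁ / α₁) * (m₂ / α₂))) / 2 ∧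
    (1 - 2 * (m₁ / α₁) + Real.sqrt (1 - 4 * (m₁ / α₁) * (m₂ / α₂))) / 2 < 1 := by
  have hσ₁ : 0 < m₁ / α₁ := div_pos hm₁ hα.1
  have hσ₂ : m₂ / α₂ < 0 := div_neg_of_pos_of_neg hm₂ hα.2
  obtain ⟨hsum_lower, hsum_upper⟩ := abs_lt.mp hσ
  have h₀ := Real.sqrt_one_sub_four_mul_mul_lt_one_sub_two_mul hσ₂ hsum_upper
  have h₁ := Real.sqrt_one_sub_four_mul_mul_lt_one_add_two_mul hσ₁ hsum_lower
  have h₁₂ := Real.sub_lt_sqrt_one_sub_four_mul_mul hσ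
  refine ⟨?_, ?_, ?_⟩ <;> linarith
end

section
/- Assume α₁>0>α₂, β₁>0>β₂, β₁>α₁, θ := α₁β₂−α₂β₁ > 0, m₁,m₂>0, σₖ = mₖ/αₖ, τₖ = mₖ/βₖ. Then the conditions (σ₁+σ₂ > 1 and τ₁+τ₂ < −1) and ((σ₁τ₂−σ₂τ₁)² + (σ₁+τ₁)(σ₂+τ₂) < 0) are incompatible: they cannot both hold. -/
/-!
With `a = σ₁`, `b = -σ₂`, `c = τ₁`, `d = -τ₂`, the stability of `M₃` says `a ≥ b + 1` and
`d ≥ c + 1`, while the stability of `F₀` says `(ad - bc)² < (a + c)(b + d)`. But once `b, c ≥ 0`,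
the two margins force `ad - bc` to dominate both `a + c` and `b + d`, so `(ad - bc)²` is at least
their product.
-/

section OrderedRing

variable {R : Type*} [CommRing R] [LinearOrder R] [IsStrictOrderedRing R] {a b c d : R}

theorem add_le_mul_sub_mul (ha : 0 ≤ a) (hc : 0 ≤ c) (hab : b + 1 ≤ a) (hcd : c + 1 ≤ d) :
    a + c ≤ a * d - b * c := by
  nlinarith [mul_le_mul_of_nonneg_left (le_sub_iff_add_le.mpr hcd) ha,
    mul_le_mul_of_nonneg_right hab hc]

theorem add_mul_add_le_sq_mul_sub_mul (hb : 0 ≤ b) (hc : 0 ≤ c) (hab : b + 1 ≤ a)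
    (hcd : c + 1 ≤ d) : (a + c) * (b + d) ≤ (a * d - b * c) ^ 2 := by
  have hac : a + c ≤ a * d - b * c := add_le_mul_sub_mul (by linarith) hc hab hcd
  have hbd : d + b ≤ d * a - c * b := add_le_mul_sub_mul (by linarith) hb hcd hab
  rw [sq]
  exact mul_le_mul hac (by linarith) (by linarith) (by linarith)

end OrderedRing

theorem stmt_5_general (α₁ α₂ β₁ β₂ m₁ m₂ : ℝ)
    (hα : α₁ > 0 ∧ 0 > α₂) (hβ : β₁ > 0 ∧ 0 > β₂)
    (hm₁ : m₁ > 0) (hm₂ : m₂ > 0)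
    (σ₁ σ₂ τ₁ τ₂ : ℝ)
    (hσ₂ : σ₂ = m₂ / α₂)
    (hτ₁ : τ₁ = m₁ / β₁) :
    ¬ ((σ₁ + σ₂ > 1 ∧ τ₁ + τ₂ < -1) ∧
        (σ₁ * τ₂ - σ₂ * τ₁) ^ 2 + (σ₁ + τ₁) * (σ₂ + τ₂) < 0) := by
  rintro ⟨⟨hσ_sum, hτ_sum⟩, hF₀⟩
  have hσ₂_nonpos : σ₂ ≤ 0 := hσ₂ ▸ div_nonpos_of_nonneg_of_nonpos hm₂.le hα.2.le
  have hτ₁_nonneg : 0 ≤ τ₁ := hτ₁ ▸ div_nonneg hm₁.le hβ.1.le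
  have key := add_mul_add_le_sq_mul_sub_mul (a := σ₁) (d := -τ₂)
    (neg_nonneg.mpr hσ₂_nonpos) hτ₁_nonneg (by linarith) (by linarith)
  linarith

theorem stmt_5 (α₁ α₂ β₁ β₂ m₁ m₂ : ℝ)
    (hα : α₁ > 0 ∧ 0 > α₂) (hβ : β₁ > 0 ∧ 0 > β₂)
    (hba : β₁ > α₁) (hθ : α₁ * β₂ - α₂ * β₁ > 0)
    (hm₁ : m₁ > 0) (hm₂ : m₂ > 0)
    (σ₁ σ₂ τ₁ τ₂ : ℝ)
    (hσ₁ : σ₁ = m₁ / α₁) (hσ₂ : σ₂ = m₂ / α₂)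
    (hτ₁ : τ₁ = m₁ / β₁) (hτ₂ : τ₂ = m₂ / β₂) :
    ¬ ((σ₁ + σ₂ > 1 ∧ τ₁ + τ₂ < -1) ∧
        (σ₁ * τ₂ - σ₂ * τ₁) ^ 2 + (σ₁ + τ₁) * (σ₂ + τ₂) < 0) :=
  stmt_5_general α₁ α₂ β₁ β₂ m₁ m₂ hα hβ hm₁ hm₂ σ₁ σ₂ τ₁ τ₂ hσ₂ hτ₁
end

section
/- Assume α₁>0>α₂, β₁>0>β₂, β₁>α₁, θ := α₁β₂−α₂β₁ > 0. Define φᴬ = α₁/(α₁−α₂), φᴬᶠ = α₁(α₁+β₁)(2α₂+β₂) / (α₁(α₁+β₁)(2α₂+β₂) − α₂(α₂+β₂)(2α₁+β₁)), φᴬᴮ = α₁β₁(α₂+β₂)/(α₁β₁(α₂+β₂) − α₂β₂(α₁+β₁)), φᴮᶠ = β₁(α₁+β₁)(α₂+2β₂)/(β₁(α₁+β₁)(α₂+2β₂) − β₂(α₂+β₂)(α₁+2β₁)), and φᴮ = β₁/(β₁−β₂). Then 0 < φᴬ < φᴬᶠ < φᴬᴮ < φᴮᶠ < φᴮ < 1.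 -/
/-!
Put `a = α₁`, `b = β₁`, `c = -α₂`, `d = -β₂`, all positive, so that `θ = b c - a d`. Each threshold
then has the form `x / (x + y)` with `x, y > 0`, and the chain is the chain of odds
`a / c < a(a+b)(2c+d) / (c(c+d)(2a+b)) < ab(c+d) / (cd(a+b)) < b(a+b)(c+2d) / (d(c+d)(a+2b)) < b / d`.
After cross-multiplication, each of these four differences factors as `θ` times a positive polynomial.
-/

theorem div_add_lt_div_add_of_mul_lt {x y x' y' : ℝ} (h : 0 < x + y) (h' : 0 < x' + y')
    (hlt : x * y' < x' * y) : x / (x + y) < x' / (x' + y') := by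
  rw [div_lt_div_iff₀ h h']
  linear_combination hlt

section Odds

variable {a b c d : ℝ}

theorem odds_A_lt_odds_AF (ha : 0 < a) (hc : 0 < c) (hθ : a * d < b * c) :
    a * (c * (c + d) * (2 * a + b)) < a * (a + b) * (2 * c + d) * c := by
  linear_combination mul_pos (mul_pos ha hc) (sub_pos.2 hθ)

theorem odds_AF_lt_odds_AB (ha : 0 < a) (hb : 0 < b) (hc : 0 < c) (hd : 0 < d)
    (hθ : a * d < b * c) :
    a * (a + b) * (2 * c + d) * (c * d * (a + b)) < a * b * (c + d) * (c * (c + d) * (2 * a + b)) := by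
  have hpos : 0 < 2 * a * c + b * c + a * d := by positivity
  linear_combination mul_pos (mul_pos (mul_pos ha hc) (sub_pos.2 hθ)) hpos

theorem odds_AB_lt_odds_BF (ha : 0 < a) (hb : 0 < b) (hc : 0 < c) (hd : 0 < d)
    (hθ : a * d < b * c) :
    a * b * (c + d) * (d * (c + d) * (a + 2 * b)) < b * (a + b) * (c + 2 * d) * (c * d * (a + b)) := by
  have hpos : 0 < b * c + a * d + 2 * b * d := by positivity
  linear_combination mul_pos (mul_pos (mul_pos hb hd) (sub_pos.2 hθ)) hpos

theorem odds_BF_lt_odds_B (hb : 0 < b) (hd : 0 < d) (hθ : a * d < b * c) :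
    b * (a + b) * (c + 2 * d) * d < b * (d * (c + d) * (a + 2 * b)) := by
  linear_combination mul_pos (mul_pos hb hd) (sub_pos.2 hθ)

end Odds

theorem stmt_6_general (α₁ α₂ β₁ β₂ : ℝ)
    (hα : α₁ > 0 ∧ 0 > α₂) (hβ : β₁ > 0 ∧ 0 > β₂)
    (hθ : α₁ * β₂ - α₂ * β₁ > 0)
    (φA φAF φAB φBF φB : ℝ)
    (hφA : φA = α₁ / (α₁ - α₂))
    (hφAF : φAF = α₁ * (α₁ + β₁) * (2 * α₂ + β₂) /
      (α₁ * (α₁ + β₁) * (2 * α₂ + β₂) - α₂ * (α₂ + β₂) * (2 * α₁ + β₁)))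
    (hφAB : φAB = α₁ * β₁ * (α₂ + β₂) /
      (α₁ * β₁ * (α₂ + β₂) - α₂ * β₂ * (α₁ + β₁)))
    (hφBF : φBF = β₁ * (α₁ + β₁) * (α₂ + 2 * β₂) /
      (β₁ * (α₁ + β₁) * (α₂ + 2 * β₂) - β₂ * (α₂ + β₂) * (α₁ + 2 * β₁)))
    (hφB : φB = β₁ / (β₁ - β₂)) :
    0 < φA ∧ φA < φAF ∧ φAF < φAB ∧ φAB < φBF ∧ φBF < φB ∧ φB < 1 := by
  obtain ⟨ha, hc⟩ := hα
  obtain ⟨hb, hd⟩ := hβ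
  obtain ⟨c, rfl⟩ : ∃ c, α₂ = -c := ⟨-α₂, (neg_neg α₂).symm⟩
  obtain ⟨d, rfl⟩ : ∃ d, β₂ = -d := ⟨-β₂, (neg_neg β₂).symm⟩
  replace hc : 0 < c := neg_lt_zero.1 hc
  replace hd : 0 < d := neg_lt_zero.1 hd
  replace hθ : α₁ * d < β₁ * c := by linarith
  rw [sub_neg_eq_add] at hφA hφB
  rw [← neg_div_neg_eq] at hφAF hφAB hφBF
  subst hφA hφAF hφAB hφBF hφB
  refine ⟨by positivity, ?_, ?_, ?_, ?_, (div_lt_one (by positivity)).2 (by linarith)⟩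
  · convert div_add_lt_div_add_of_mul_lt (by positivity) (by positivity)
      (odds_A_lt_odds_AF ha hc hθ) using 2 <;> ring
  · convert div_add_lt_div_add_of_mul_lt (by positivity) (by positivity)
      (odds_AF_lt_odds_AB ha hb hc hd hθ) using 2 <;> ring
  · convert div_add_lt_div_add_of_mul_lt (by positivity) (by positivity)
      (odds_AB_lt_odds_BF ha hb hc hd hθ) using 2 <;> ring
  · convert div_add_lt_div_add_of_mul_lt (by positivity) (by positivity)
      (odds_BF_lt_odds_B hb hd hθ) using 2 <;> ring

theorem stmt_6 (α₁ α₂ β₁ β₂ : ℝ)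
    (hα : α₁ > 0 ∧ 0 > α₂) (hβ : β₁ > 0 ∧ 0 > β₂)
    (hba : β₁ > α₁) (hθ : α₁ * β₂ - α₂ * β₁ > 0)
    (φA φAF φAB φBF φB : ℝ)
    (hφA : φA = α₁ / (α₁ - α₂))
    (hφAF : φAF = α₁ * (α₁ + β₁) * (2 * α₂ + β₂) /
      (α₁ * (α₁ + β₁) * (2 * α₂ + β₂) - α₂ * (α₂ + β₂) * (2 * α₁ + β₁)))
    (hφAB : φAB = α₁ * β₁ * (α₂ + β₂) /
      (α₁ * β₁ * (α₂ + β₂) - α₂ * β₂ * (α₁ + β₁)))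
    (hφBF : φBF = β₁ * (α₁ + β₁) * (α₂ + 2 * β₂) /
      (β₁ * (α₁ + β₁) * (α₂ + 2 * β₂) - β₂ * (α₂ + β₂) * (α₁ + 2 * β₁)))
    (hφB : φB = β₁ / (β₁ - β₂)) :
    0 < φA ∧ φA < φAF ∧ φAF < φAB ∧ φAB < φBF ∧ φBF < φB ∧ φB < 1 :=
  stmt_6_general α₁ α₂ β₁ β₂ hα hβ hθ φA φAF φAB φBF φB hφA hφAF hφAB hφBF hφB
end

section
/- Assume α₁>0>α₂, β₁>0>β₂, β₁>α₁, θ := α₁β₂−α₂β₁ > 0. Define φᴬ = α₁/(α₁−α₂) and φ̃ᴬᴮ = α₁β₁(α₂−β₂)/(α₁β₁(α₂−β₂) − α₂β₂(α₁−β₁)). Then β₂ < α₂ if and only if 0 < φ̃ᴬᴮ < φᴬ. -/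
/-!
Write `φ̃ᴬᴮ = N / (N + E)` with `N = α₁β₁(α₂ - β₂)` and `E = α₂β₂(β₁ - α₁) > 0`, so that `β₂ < α₂`
means `0 < N`. Since `φᴬ < 1`, the bounds `0 < φ̃ᴬᴮ < φᴬ` force `N + E > 0` and then `N > 0`.
Conversely, for `N > 0` the bound `φ̃ᴬᴮ < φᴬ` is equivalent to `α₂ N + α₁ E > 0`, and
`α₂ N + α₁ E = -α₁α₂θ`.
-/

lemma pos_of_div_add_mem_Ioo_zero_one {N E : ℝ} (hE : 0 < E)
    (h0 : 0 < N / (N + E)) (h1 : N / (N + E) < 1) : 0 < N := by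
  rcases div_pos_iff.mp h0 with ⟨hN, -⟩ | ⟨-, hNE⟩
  · exact hN
  · have := (div_lt_one_of_neg hNE).mp h1
    linarith

lemma div_add_lt_div_sub_of_pos {a b N E : ℝ} (ha : 0 < a) (hb : b < 0) (hE : 0 < E)
    (hkey : 0 < b * N + a * E) (hN : 0 < N) : N / (N + E) < a / (a - b) := by
  rw [div_lt_div_iff₀ (by linarith) (by linarith)]
  linarith

theorem pos_iff_div_add_mem_Ioo {a b N E : ℝ} (ha : 0 < a) (hb : b < 0) (hE : 0 < E)
    (hkey : 0 < b * N + a * E) : 0 < N ↔ 0 < N / (N + E) ∧ N / (N + E) < a / (a - b) := by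
  refine ⟨fun hN => ⟨div_pos hN (by linarith), div_add_lt_div_sub_of_pos ha hb hE hkey hN⟩,
    fun ⟨h0, h1⟩ => pos_of_div_add_mem_Ioo_zero_one hE h0 (h1.trans ?_)⟩
  exact (div_lt_one (by linarith)).mpr (by linarith)

theorem stmt_7 (α₁ α₂ β₁ β₂ : ℝ)
    (hα : α₁ > 0 ∧ 0 > α₂) (hβ : β₁ > 0 ∧ 0 > β₂)
    (hba : β₁ > α₁) (hθ : α₁ * β₂ - α₂ * β₁ > 0)
    (φA φABt : ℝ)
    (hφA : φA = α₁ / (α₁ - α₂))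
    (hφABt : φABt = α₁ * β₁ * (α₂ - β₂) /
      (α₁ * β₁ * (α₂ - β₂) - α₂ * β₂ * (α₁ - β₁))) :
    β₂ < α₂ ↔ (0 < φABt ∧ φABt < φA) := by
  obtain ⟨hα₁, hα₂⟩ := hα
  obtain ⟨hβ₁, hβ₂⟩ := hβ
  set N := α₁ * β₁ * (α₂ - β₂)
  set E := α₂ * β₂ * (β₁ - α₁)
  have hE : 0 < E := mul_pos (mul_pos_of_neg_of_neg hα₂ hβ₂) (sub_pos.mpr hba)
  have hkey : α₂ * N + α₁ * E = -(α₁ * α₂) * (α₁ * β₂ - α₂ * β₁) := by ring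
  have hkey_pos : 0 < α₂ * N + α₁ * E :=
    hkey ▸ mul_pos (neg_pos.mpr (mul_neg_of_pos_of_neg hα₁ hα₂)) hθ
  have hφABt' : φABt = N / (N + E) := by rw [hφABt]; ring
  have hN : β₂ < α₂ ↔ 0 < N := by
    rw [← sub_pos]
    exact (mul_pos_iff_of_pos_left (mul_pos hα₁ hβ₁)).symm
  rw [hN, hφABt', hφA]
  exact pos_iff_div_add_mem_Ioo hα₁ hα₂ hE hkey_pos
end

section
/- Assume α₁>0>α₂, β₁>0>β₂, β₁>α₁, θ := α₁β₂−α₂β₁ > 0, and let φᴬᶠ = α₁(α₁+β₁)(2α₂+β₂)/(α₁(α₁+β₁)(2α₂+β₂)−α₂(α₂+β₂)(2α₁+β₁)), φᶠ = (α₁+β₁)/(α₁+β₁−α₂−β₂), φᴮᶠ = β₁(α₁+β₁)(α₂+2β₂)/(β₁(α₁+β₁)(α₂+2β₂)−β₂(α₂+β₂)(α₁+2β₁)). Then φᴬᶠ < φᶠ < φᴮᶠ. -/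
/-!
Write `s = α₁ + β₁` and `m = -(α₂ + β₂)`, both positive. Each critical ratio has the shape
`x / (x + y)` with `x, y > 0`: `φᶠ = s / (s + m)`, and `φᴬᶠ`, `φᴮᶠ` after negating numerator and
denominator. Comparing two such ratios amounts to comparing the cross products `x * v` and `u * y`,
and in both comparisons the difference of the cross products factors as `s * m * θ > 0`.
-/

lemma div_add_lt_div_add {x y u v : ℝ} (hxy : 0 < x + y) (huv : 0 < u + v)
    (h : x * v < u * y) : x / (x + y) < u / (u + v) := by
  rw [div_lt_div_iff₀ hxy huv]
  linear_combination h

lemma div_sub_eq_neg_div_neg_add (a b : ℝ) : a / (a - b) = -a / (-a + b) := by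
  rw [← neg_div_neg_eq, neg_sub, sub_eq_neg_add]

theorem stmt_8_general (α₁ α₂ β₁ β₂ : ℝ)
    (hα : α₁ > 0 ∧ 0 > α₂) (hβ : β₁ > 0 ∧ 0 > β₂)
    (hθ : α₁ * β₂ - α₂ * β₁ > 0)
    (φAF φF φBF : ℝ)
    (hφAF : φAF = α₁ * (α₁ + β₁) * (2 * α₂ + β₂) /
      (α₁ * (α₁ + β₁) * (2 * α₂ + β₂) - α₂ * (α₂ + β₂) * (2 * α₁ + β₁)))
    (hφF : φF = (α₁ + β₁) / (α₁ + β₁ - α₂ - β₂))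
    (hφBF : φBF = β₁ * (α₁ + β₁) * (α₂ + 2 * β₂) /
      (β₁ * (α₁ + β₁) * (α₂ + 2 * β₂) - β₂ * (α₂ + β₂) * (α₁ + 2 * β₁))) :
    φAF < φF ∧ φF < φBF := by
  obtain ⟨hα₁, hα₂⟩ := hα
  obtain ⟨hβ₁, hβ₂⟩ := hβ
  have hs : 0 < α₁ + β₁ := add_pos hα₁ hβ₁
  have hm : 0 < -(α₂ + β₂) := by linarith
  have hsmθ : 0 < (α₁ + β₁) * -(α₂ + β₂) * (α₁ * β₂ - α₂ * β₁) := mul_pos (mul_pos hs hm) hθ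
  have hF : φF = (α₁ + β₁) / ((α₁ + β₁) + -(α₂ + β₂)) := by rw [hφF]; congr 1; ring
  rw [hF, hφAF, hφBF, div_sub_eq_neg_div_neg_add, div_sub_eq_neg_div_neg_add]
  constructor
  · refine div_add_lt_div_add ?_ (by linarith) (by linear_combination hsmθ)
    nlinarith [mul_pos hα₁ hs, mul_pos_of_neg_of_neg hα₂ (neg_pos.mp hm)]
  · refine div_add_lt_div_add (by linarith) ?_ (by linear_combination hsmθ)
    nlinarith [mul_pos hβ₁ hs, mul_pos_of_neg_of_neg hβ₂ (neg_pos.mp hm)]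

theorem stmt_8 (α₁ α₂ β₁ β₂ : ℝ)
    (hα : α₁ > 0 ∧ 0 > α₂) (hβ : β₁ > 0 ∧ 0 > β₂)
    (hba : β₁ > α₁) (hθ : α₁ * β₂ - α₂ * β₁ > 0)
    (φAF φF φBF : ℝ)
    (hφAF : φAF = α₁ * (α₁ + β₁) * (2 * α₂ + β₂) /
      (α₁ * (α₁ + β₁) * (2 * α₂ + β₂) - α₂ * (α₂ + β₂) * (2 * α₁ + β₁)))
    (hφF : φF = (α₁ + β₁) / (α₁ + β₁ - α₂ - β₂))
    (hφBF : φBF = β₁ * (α₁ + β₁) * (α₂ + 2 * β₂) /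
      (β₁ * (α₁ + β₁) * (α₂ + 2 * β₂) - β₂ * (α₂ + β₂) * (α₁ + 2 * β₁))) :
    φAF < φF ∧ φF < φBF :=
  stmt_8_general α₁ α₂ β₁ β₂ hα hβ hθ φAF φF φBF hφAF hφF hφBF
end

section
/- Assume α₁>0>α₂, β₁>0>β₂, β₁>α₁, θ := α₁β₂−α₂β₁ > 0, and fix 0 < φ < 1. Let mᴬ = α₁α₂/(α₁−φ(α₁−α₂)), mᴮ = β₁β₂/(β₁−φ(β₁−β₂)), and m* = (1/θ)·√(−α₁α₂β₁β₂(α₁+β₁)(α₂+β₂)/(φ(1−φ))). Then min{|mᴬ|, |mᴮ|} ≤ m*. -/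
/-!
The reciprocals of the single-locus rates are convex combinations,
`mA⁻¹ = (1 - φ) α₂⁻¹ + φ α₁⁻¹` and `mB⁻¹ = (1 - φ) β₂⁻¹ + φ β₁⁻¹`. The two combinations of
`mA⁻¹, mB⁻¹` that eliminate one of the weights are `(1 - φ) θ / P` and `φ θ / P`, with
`P = α₁ α₂ β₁ β₂`; each is bounded by `M = max |mA⁻¹| |mB⁻¹|` through the triangle inequality.
Multiplying the two bounds gives `φ (1 - φ) θ² ≤ -(P (α₁ + β₁) (α₂ + β₂)) M²`, that is
`1 ≤ m* M`; hence `min |mA| |mB| = M⁻¹ ≤ m*`.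
-/

lemma inv_mul_div_sub_mul_sub {a b : ℝ} (ha : a ≠ 0) (hb : b ≠ 0) (φ : ℝ) :
    (a * b / (a - φ * (a - b)))⁻¹ = (1 - φ) * b⁻¹ + φ * a⁻¹ := by
  rw [inv_div]
  field_simp
  ring

lemma abs_mul_sub_mul_le_mul_max (s t u v : ℝ) :
    |s * u - t * v| ≤ (|s| + |t|) * max |u| |v| :=
  calc |s * u - t * v| ≤ |s| * |u| + |t| * |v| := by
        simpa only [abs_mul] using abs_sub (s * u) (t * v)
    _ ≤ |s| * max |u| |v| + |t| * max |u| |v| := by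
        gcongr
        exacts [le_max_left _ _, le_max_right _ _]
    _ = (|s| + |t|) * max |u| |v| := by ring

lemma mul_sub_mul_mul_le_sq_max (s₁ t₁ s₂ t₂ u v : ℝ) :
    (s₁ * u - t₁ * v) * (s₂ * u - t₂ * v) ≤
      (|s₁| + |t₁|) * (|s₂| + |t₂|) * max |u| |v| ^ 2 :=
  calc (s₁ * u - t₁ * v) * (s₂ * u - t₂ * v)
        ≤ |s₁ * u - t₁ * v| * |s₂ * u - t₂ * v| := by
          rw [← abs_mul]; exact le_abs_self _
    _ ≤ ((|s₁| + |t₁|) * max |u| |v|) * ((|s₂| + |t₂|) * max |u| |v|) :=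
          mul_le_mul (abs_mul_sub_mul_le_mul_max ..) (abs_mul_sub_mul_le_mul_max ..)
            (abs_nonneg _) (by positivity)
    _ = (|s₁| + |t₁|) * (|s₂| + |t₂|) * max |u| |v| ^ 2 := by ring

lemma min_abs_le_of_one_le_mul_max_abs_inv {u v m : ℝ} (h : 1 ≤ m * max |u⁻¹| |v⁻¹|) :
    min |u| |v| ≤ m := by
  rcases le_total |u⁻¹| |v⁻¹| with huv | huv
  · rw [max_eq_right huv, abs_inv] at h
    have hv : 0 < |v| := abs_pos.2 (by rintro rfl; norm_num at h)
    exact min_le_of_right_le (by simpa using (le_mul_inv_iff₀ hv).1 h)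
  · rw [max_eq_left huv, abs_inv] at h
    have hu : 0 < |u| := abs_pos.2 (by rintro rfl; norm_num at h)
    exact min_le_of_left_le (by simpa using (le_mul_inv_iff₀ hu).1 h)

lemma mul_one_sub_mul_sq_le_mul_max_abs_sq {α₁ α₂ β₁ β₂ φ u v : ℝ}
    (hα₁ : 0 < α₁) (hα₂ : α₂ < 0) (hβ₁ : 0 < β₁) (hβ₂ : β₂ < 0)
    (hu : u = (1 - φ) * α₂⁻¹ + φ * α₁⁻¹) (hv : v = (1 - φ) * β₂⁻¹ + φ * β₁⁻¹) :
    φ * (1 - φ) * (α₁ * β₂ - α₂ * β₁) ^ 2 ≤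
      -(α₁ * α₂ * β₁ * β₂ * (α₁ + β₁) * (α₂ + β₂)) * max |u| |v| ^ 2 := by
  have hP : 0 < α₁ * α₂ * β₁ * β₂ := by
    have := mul_pos (mul_pos hα₁ hβ₁) (mul_pos_of_neg_of_neg hα₂ hβ₂)
    linarith
  have h := mul_sub_mul_mul_le_sq_max β₁⁻¹ α₁⁻¹ (-β₂⁻¹) (-α₂⁻¹) u v
  have hlhs : (β₁⁻¹ * u - α₁⁻¹ * v) * (-β₂⁻¹ * u - -α₂⁻¹ * v) =
      φ * (1 - φ) * (α₁ * β₂ - α₂ * β₁) ^ 2 / (α₁ * α₂ * β₁ * β₂) ^ 2 := by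
    rw [hu, hv]
    field_simp [hα₂.ne, hβ₂.ne]
    ring
  have hrhs : (|β₁⁻¹| + |α₁⁻¹|) * (|-β₂⁻¹| + |-α₂⁻¹|) =
      -(α₁ * α₂ * β₁ * β₂ * (α₁ + β₁) * (α₂ + β₂)) / (α₁ * α₂ * β₁ * β₂) ^ 2 := by
    rw [abs_neg, abs_neg, abs_of_pos (inv_pos.2 hβ₁), abs_of_pos (inv_pos.2 hα₁),
      abs_of_neg (inv_lt_zero.2 hβ₂), abs_of_neg (inv_lt_zero.2 hα₂)]
    field_simp [hα₂.ne, hβ₂.ne]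
    ring
  rw [hlhs, hrhs, div_mul_eq_mul_div] at h
  exact (div_le_div_iff_of_pos_right (pow_pos hP 2)).1 h

lemma one_le_one_div_mul_sqrt_div_mul {θ D N M : ℝ} (hθ : 0 < θ) (hD : 0 < D) (hM : 0 ≤ M)
    (h : D * θ ^ 2 ≤ N * M ^ 2) :
    1 ≤ 1 / θ * √(N / D) * M := by
  have hN : 0 < N :=
    pos_of_mul_pos_left ((by positivity : 0 < D * θ ^ 2).trans_le h) (by positivity)
  have hsq : (1 / θ * √(N / D) * M) ^ 2 = N * M ^ 2 / (D * θ ^ 2) := by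
    rw [mul_pow, mul_pow, Real.sq_sqrt (by positivity)]
    field_simp
  refine (one_le_pow_iff_of_nonneg (by positivity) two_ne_zero).1 ?_
  rw [hsq]
  exact (one_le_div (by positivity)).2 h

theorem stmt_10_general (α₁ α₂ β₁ β₂ φ mA mB mstar : ℝ)
    (hα : α₁ > 0 ∧ 0 > α₂) (hβ : β₁ > 0 ∧ 0 > β₂)
    (hθ : α₁ * β₂ - α₂ * β₁ > 0)
    (hφ : 0 < φ ∧ φ < 1)
    (hmA : mA = α₁ * α₂ / (α₁ - φ * (α₁ - α₂)))
    (hmB : mB = β₁ * β₂ / (β₁ - φ * (β₁ - β₂)))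
    (hmstar : mstar = (1 / (α₁ * β₂ - α₂ * β₁)) *
      Real.sqrt (-(α₁ * α₂ * β₁ * β₂ * (α₁ + β₁) * (α₂ + β₂)) / (φ * (1 - φ)))) :
    min |mA| |mB| ≤ mstar := by
  obtain ⟨hα₁, hα₂⟩ := hα
  obtain ⟨hβ₁, hβ₂⟩ := hβ
  have hA : mA⁻¹ = (1 - φ) * α₂⁻¹ + φ * α₁⁻¹ := hmA ▸ inv_mul_div_sub_mul_sub hα₁.ne' hα₂.ne φ
  have hB : mB⁻¹ = (1 - φ) * β₂⁻¹ + φ * β₁⁻¹ := hmB ▸ inv_mul_div_sub_mul_sub hβ₁.ne' hβ₂.ne φ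
  have hbound := mul_one_sub_mul_sq_le_mul_max_abs_sq hα₁ hα₂ hβ₁ hβ₂ hA hB
  apply min_abs_le_of_one_le_mul_max_abs_inv
  rw [hmstar]
  exact one_le_one_div_mul_sqrt_div_mul hθ (mul_pos hφ.1 (sub_pos.2 hφ.2))
    (le_max_of_le_left (abs_nonneg _)) hbound

theorem stmt_10 (α₁ α₂ β₁ β₂ φ mA mB mstar : ℝ)
    (hα : α₁ > 0 ∧ 0 > α₂) (hβ : β₁ > 0 ∧ 0 > β₂)
    (hba : β₁ > α₁) (hθ : α₁ * β₂ - α₂ * β₁ > 0)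
    (hab : α₁ + β₁ > 0 ∧ 0 > α₂ + β₂)
    (hφ : 0 < φ ∧ φ < 1)
    (hmA : mA = α₁ * α₂ / (α₁ - φ * (α₁ - α₂)))
    (hmB : mB = β₁ * β₂ / (β₁ - φ * (β₁ - β₂)))
    (hmstar : mstar = (1 / (α₁ * β₂ - α₂ * β₁)) *
      Real.sqrt (-(α₁ * α₂ * β₁ * β₂ * (α₁ + β₁) * (α₂ + β₂)) / (φ * (1 - φ)))) :
    min |mA| |mB| ≤ mstar :=
  stmt_10_general α₁ α₂ β₁ β₂ φ mA mB mstar hα hβ hθ hφ hmA hmB hmstar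
end

section
/- Assume α₁>0>α₂, β₁>0>β₂, β₁>α₁, θ := α₁β₂−α₂β₁ > 0, fix 0 < φ < 1 with m₁ = φm, m₂ = (1−φ)m for m > 0, and define mᴬ, mᴮ as before and φᴮ = β₁/(β₁−β₂), φᴬᴮ = α₁β₁(α₂+β₂)/(α₁β₁(α₂+β₂)−α₂β₂(α₁+β₁)). Then 0 < mᴬ < −mᴮ if and only if φᴬᴮ < φ < φᴮ. -/
/-!
Write `dᴬ = α₁ - φ (α₁ - α₂)` and `dᴮ = β₁ - φ (β₁ - β₂)`, so `mᴬ = α₁α₂ / dᴬ` and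
`mᴮ = β₁β₂ / dᴮ` with negative numerators. Then `0 < mᴬ < -mᴮ` says exactly that `dᴬ < 0 < dᴮ`
and `α₁α₂ dᴮ + dᴬ β₁β₂ > 0`. The last quantity is affine in `φ`, equal to `N - φ D` with
`φᴬᴮ = N / D` and `D < 0`, so it is positive iff `φᴬᴮ < φ`; likewise `0 < dᴮ` iff `φ < φᴮ`.
Finally `dᴬ < 0` iff `φ > α₁ / (α₁ - α₂)`, and `θ > 0` puts this threshold below `φᴬᴮ`, so
that condition is implied by the other two.
-/

section Ordered

variable {𝕜 : Type*} [Field 𝕜] [LinearOrder 𝕜] [IsStrictOrderedRing 𝕜] {x y p q : 𝕜}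

lemma div_lt_neg_div_iff_of_neg_of_pos (hp : p < 0) (hq : 0 < q) :
    x / p < -(y / q) ↔ 0 < x * q + p * y := by
  rw [← sub_neg, sub_neg_eq_add, div_add_div _ _ hp.ne hq.ne',
    div_lt_iff_of_neg (mul_neg_of_neg_of_pos hp hq), zero_mul]

lemma pos_div_and_div_lt_neg_div_iff (hx : x < 0) (hy : y < 0) :
    0 < x / p ∧ x / p < -(y / q) ↔ p < 0 ∧ 0 < q ∧ 0 < x * q + p * y := by
  constructor
  · rintro ⟨hpos, hlt⟩
    have hp : p < 0 := by
      by_contra! hp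
      exact (div_nonpos_of_nonpos_of_nonneg hx.le hp).not_gt hpos
    have hq : 0 < q := by
      by_contra! hq
      linarith [div_nonneg_of_nonpos hy.le hq]
    exact ⟨hp, hq, (div_lt_neg_div_iff_of_neg_of_pos hp hq).1 hlt⟩
  · rintro ⟨hp, hq, hsum⟩
    exact ⟨div_pos_of_neg_of_neg hx hp, (div_lt_neg_div_iff_of_neg_of_pos hp hq).2 hsum⟩

lemma sub_mul_sub_neg_iff_div_lt {a₁ a₂ φ : 𝕜} (h : a₂ < a₁) :
    a₁ - φ * (a₁ - a₂) < 0 ↔ a₁ / (a₁ - a₂) < φ := by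
  rw [div_lt_iff₀ (sub_pos.2 h)]
  constructor <;> intro <;> linarith

lemma sub_mul_sub_pos_iff_lt_div {a₁ a₂ φ : 𝕜} (h : a₂ < a₁) :
    0 < a₁ - φ * (a₁ - a₂) ↔ φ < a₁ / (a₁ - a₂) := by
  rw [lt_div_iff₀ (sub_pos.2 h)]
  constructor <;> intro <;> linarith

end Ordered

section Thresholds

variable {α₁ α₂ β₁ β₂ : ℝ}

lemma threshold_denom_neg (hα₁ : 0 < α₁) (hα₂ : α₂ < 0) (hβ₁ : 0 < β₁) (hβ₂ : β₂ < 0) :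
    α₁ * β₁ * (α₂ + β₂) - α₂ * β₂ * (α₁ + β₁) < 0 := by
  have hN : α₁ * β₁ * (α₂ + β₂) < 0 := mul_neg_of_pos_of_neg (mul_pos hα₁ hβ₁) (by linarith)
  have hP : 0 < α₂ * β₂ * (α₁ + β₁) := mul_pos (mul_pos_of_neg_of_neg hα₂ hβ₂) (by linarith)
  linarith

lemma cross_sum_pos_iff (φ : ℝ) (hα₁ : 0 < α₁) (hα₂ : α₂ < 0) (hβ₁ : 0 < β₁) (hβ₂ : β₂ < 0) :
    0 < α₁ * α₂ * (β₁ - φ * (β₁ - β₂)) + (α₁ - φ * (α₁ - α₂)) * (β₁ * β₂) ↔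
      α₁ * β₁ * (α₂ + β₂) / (α₁ * β₁ * (α₂ + β₂) - α₂ * β₂ * (α₁ + β₁)) < φ := by
  rw [div_lt_iff_of_neg (threshold_denom_neg hα₁ hα₂ hβ₁ hβ₂)]
  constructor <;> intro <;> linarith

lemma div_sub_lt_threshold (hα₁ : 0 < α₁) (hα₂ : α₂ < 0) (hβ₁ : 0 < β₁) (hβ₂ : β₂ < 0)
    (hθ : 0 < α₁ * β₂ - α₂ * β₁) :
    α₁ / (α₁ - α₂) <
      α₁ * β₁ * (α₂ + β₂) / (α₁ * β₁ * (α₂ + β₂) - α₂ * β₂ * (α₁ + β₁)) := by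
  rw [lt_div_iff_of_neg (threshold_denom_neg hα₁ hα₂ hβ₁ hβ₂), div_mul_eq_mul_div,
    lt_div_iff₀ (by linarith)]
  have hgap : α₁ * (α₁ * β₁ * (α₂ + β₂) - α₂ * β₂ * (α₁ + β₁)) -
      α₁ * β₁ * (α₂ + β₂) * (α₁ - α₂) = -(α₁ * α₂) * (α₁ * β₂ - α₂ * β₁) := by ring
  nlinarith [mul_pos (neg_pos.2 (mul_neg_of_pos_of_neg hα₁ hα₂)) hθ]

end Thresholds

theorem stmt_12_general (α₁ α₂ β₁ β₂ φ mA mB φB φAB : ℝ)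
    (hα : α₁ > 0 ∧ 0 > α₂) (hβ : β₁ > 0 ∧ 0 > β₂)
    (hθ : α₁ * β₂ - α₂ * β₁ > 0)
    (hmA : mA = α₁ * α₂ / (α₁ - φ * (α₁ - α₂)))
    (hmB : mB = β₁ * β₂ / (β₁ - φ * (β₁ - β₂)))
    (hφB : φB = β₁ / (β₁ - β₂))
    (hφAB : φAB = α₁ * β₁ * (α₂ + β₂) /
      (α₁ * β₁ * (α₂ + β₂) - α₂ * β₂ * (α₁ + β₁))) :
    (0 < mA ∧ mA < -mB) ↔ (φAB < φ ∧ φ < φB) := by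
  obtain ⟨hα₁, hα₂⟩ := hα
  obtain ⟨hβ₁, hβ₂⟩ := hβ
  have hφA : α₁ / (α₁ - α₂) < φAB := hφAB ▸ div_sub_lt_threshold hα₁ hα₂ hβ₁ hβ₂ hθ
  rw [hmA, hmB, hφB, hφAB,
    pos_div_and_div_lt_neg_div_iff (mul_neg_of_pos_of_neg hα₁ hα₂) (mul_neg_of_pos_of_neg hβ₁ hβ₂),
    sub_mul_sub_neg_iff_div_lt (by linarith), sub_mul_sub_pos_iff_lt_div (by linarith),
    cross_sum_pos_iff φ hα₁ hα₂ hβ₁ hβ₂, ← hφAB]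
  constructor
  · rintro ⟨-, hltB, hgtAB⟩
    exact ⟨hgtAB, hltB⟩
  · rintro ⟨hgtAB, hltB⟩
    exact ⟨hφA.trans hgtAB, hltB, hgtAB⟩

theorem stmt_12 (α₁ α₂ β₁ β₂ φ mA mB φB φAB : ℝ)
    (hα : α₁ > 0 ∧ 0 > α₂) (hβ : β₁ > 0 ∧ 0 > β₂)
    (hba : β₁ > α₁) (hθ : α₁ * β₂ - α₂ * β₁ > 0)
    (hφ : 0 < φ ∧ φ < 1)
    (hmA : mA = α₁ * α₂ / (α₁ - φ * (α₁ - α₂)))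
    (hmB : mB = β₁ * β₂ / (β₁ - φ * (β₁ - β₂)))
    (hφB : φB = β₁ / (β₁ - β₂))
    (hφAB : φAB = α₁ * β₁ * (α₂ + β₂) /
      (α₁ * β₁ * (α₂ + β₂) - α₂ * β₂ * (α₁ + β₁))) :
    (0 < mA ∧ mA < -mB) ↔ (φAB < φ ∧ φ < φB) :=
  stmt_12_general α₁ α₂ β₁ β₂ φ mA mB φB φAB hα hβ hθ hmA hmB hφB hφAB
end

section
/- Assume α₁>0>α₂, β₁>0>β₂, β₁>α₁, θ := α₁β₂−α₂β₁ > 0, 0 < φ < 1, and define mᴬ = α₁α₂/(α₁−φ(α₁−α₂)), mᴮ = β₁β₂/(β₁−φ(β₁−β₂)). Then it is impossible that 0 < mᴮ ≤ mᴬ, impossible that 0 < −mᴬ ≤ mᴮ, and impossible that 0 < mᴮ ≤ −mᴬ. -/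
/-!
Writing `m = s₁ s₂ / (s₁ - φ (s₁ - s₂))`, one has `m⁻¹ = φ / s₁ + (1 - φ) / s₂`, so `m > 0` exactly
when this weighted sum of reciprocals is positive. Multiplied by `s₁` it becomes `φ + (1 - φ) s₁ / s₂`,
and `θ > 0` says `β₁ / β₂ < α₁ / α₂`; together with `α₁ < β₁` this gives `0 < mᴮ⁻¹ < mᴬ⁻¹` whenever
`mᴮ > 0`, i.e. `0 < mᴬ < mᴮ`, which rules out all three configurations.
-/

noncomputable def criticalMigration (φ s₁ s₂ : ℝ) : ℝ :=
  s₁ * s₂ / (s₁ - φ * (s₁ - s₂))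

lemma criticalMigration_inv {φ s₁ s₂ : ℝ} (h₁ : s₁ ≠ 0) (h₂ : s₂ ≠ 0) :
    (criticalMigration φ s₁ s₂)⁻¹ = φ / s₁ + (1 - φ) / s₂ := by
  rw [criticalMigration, inv_div]
  field_simp
  ring

lemma weighted_inv_lt_weighted_inv {φ α₁ α₂ β₁ β₂ : ℝ} (hφ : φ < 1) (hα₁ : 0 < α₁)
    (hα₂ : α₂ < 0) (hβ₂ : β₂ < 0) (hαβ : α₁ < β₁) (hθ : α₂ * β₁ < α₁ * β₂)
    (hB : 0 < φ / β₁ + (1 - φ) / β₂) :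
    φ / β₁ + (1 - φ) / β₂ < φ / α₁ + (1 - φ) / α₂ := by
  have hβ₁ : 0 < β₁ := hα₁.trans hαβ
  have hratio : β₁ / β₂ < α₁ / α₂ := by
    have h : α₁ / α₂ - β₁ / β₂ = (α₁ * β₂ - α₂ * β₁) / (α₂ * β₂) :=
      div_sub_div _ _ hα₂.ne hβ₂.ne
    exact sub_pos.mp (h ▸ div_pos (sub_pos.mpr hθ) (mul_pos_of_neg_of_neg hα₂ hβ₂))
  have hscaled : β₁ * (φ / β₁ + (1 - φ) / β₂) < α₁ * (φ / α₁ + (1 - φ) / α₂) := by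
    have h : β₁ * (φ / β₁ + (1 - φ) / β₂) = φ + (1 - φ) * (β₁ / β₂) := by field_simp
    have h' : α₁ * (φ / α₁ + (1 - φ) / α₂) = φ + (1 - φ) * (α₁ / α₂) := by field_simp
    rw [h, h']
    gcongr
  calc φ / β₁ + (1 - φ) / β₂ = β₁ * (φ / β₁ + (1 - φ) / β₂) / β₁ := by field_simp
    _ < β₁ * (φ / β₁ + (1 - φ) / β₂) / α₁ := div_lt_div_of_pos_left (mul_pos hβ₁ hB) hα₁ hαβ
    _ < α₁ * (φ / α₁ + (1 - φ) / α₂) / α₁ := div_lt_div_of_pos_right hscaled hα₁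
    _ = φ / α₁ + (1 - φ) / α₂ := by field_simp

lemma criticalMigration_pos_and_lt {φ α₁ α₂ β₁ β₂ : ℝ} (hφ : φ < 1) (hα₁ : 0 < α₁)
    (hα₂ : α₂ < 0) (hβ₂ : β₂ < 0) (hαβ : α₁ < β₁) (hθ : α₂ * β₁ < α₁ * β₂)
    (hB : 0 < criticalMigration φ β₁ β₂) :
    0 < criticalMigration φ α₁ α₂ ∧ criticalMigration φ α₁ α₂ < criticalMigration φ β₁ β₂ := by
  rw [← inv_pos, criticalMigration_inv (hα₁.trans hαβ).ne' hβ₂.ne] at hB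
  have hlt := weighted_inv_lt_weighted_inv hφ hα₁ hα₂ hβ₂ hαβ hθ hB
  rw [← inv_inv (criticalMigration φ α₁ α₂), ← inv_inv (criticalMigration φ β₁ β₂),
    criticalMigration_inv hα₁.ne' hα₂.ne, criticalMigration_inv (hα₁.trans hαβ).ne' hβ₂.ne]
  exact ⟨inv_pos.mpr (hB.trans hlt), inv_strictAnti₀ hB hlt⟩

theorem stmt_13 (α₁ α₂ β₁ β₂ φ mA mB : ℝ)
    (hα : α₁ > 0 ∧ 0 > α₂) (hβ : β₁ > 0 ∧ 0 > β₂)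
    (hba : β₁ > α₁) (hθ : α₁ * β₂ - α₂ * β₁ > 0)
    (hφ : 0 < φ ∧ φ < 1)
    (hmA : mA = α₁ * α₂ / (α₁ - φ * (α₁ - α₂)))
    (hmB : mB = β₁ * β₂ / (β₁ - φ * (β₁ - β₂))) :
    ¬ (0 < mB ∧ mB ≤ mA) ∧ ¬ (0 < -mA ∧ -mA ≤ mB) ∧ ¬ (0 < mB ∧ mB ≤ -mA) := by
  change mA = criticalMigration φ α₁ α₂ at hmA
  change mB = criticalMigration φ β₁ β₂ at hmB
  rcases le_or_gt mB 0 with hB | hB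
  · refine ⟨?_, ?_, ?_⟩ <;> rintro ⟨h₁, h₂⟩ <;> linarith
  · obtain ⟨hA, hAB⟩ := criticalMigration_pos_and_lt hφ.2 hα.1 hα.2 hβ.2 hba (by linarith)
      (hmB ▸ hB)
    rw [← hmA, ← hmB] at hAB
    refine ⟨?_, ?_, ?_⟩ <;> rintro ⟨h₁, h₂⟩ <;> linarith
end

section
/- Assume α₁>0>α₂, β₁>0>β₂ with α₁+β₁>0>α₂+β₂, m₁,m₂>0, and set κₖ = mₖ/(αₖ+βₖ). If |κ₁+κ₂| < 1, then p̂₁ = (1−2κ₁+√(1−4κ₁κ₂))/2 and p̂₂ = (1−2κ₂−√(1−4κ₁κ₂))/2 satisfy 0 < p̂₂ < p̂₁ < 1 and the pair (p̂₁,p̂₂) solves (α₁+β₁)p(1−p) + m₁(p' − p) = 0, (α₂+β₂)p'(1−p') + m₂(p − p') = 0. -/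
/-!
With `κₖ = mₖ / (αₖ + βₖ)` the two equilibrium equations become `p(1-p) = κ₁(p - p')` and
`p'(1-p') = κ₂(p' - p)`; eliminating gives a quadratic whose discriminant is `1 - 4κ₁κ₂`, and
the stated pair is one of its root pairs. The bounds `0 < p̂₂ < p̂₁ < 1` each reduce, after
squaring, to a sign condition on `κ₂(κ₁ + κ₂ - 1)`, `(κ₁ + κ₂)² - 1` or `κ₁(κ₁ + κ₂ + 1)`.
-/

lemma selection_migration_balance {a m κ κ' s p p' : ℝ} (ha : a ≠ 0) (hκ : κ = m / a)
    (hs : s ^ 2 = 1 - 4 * κ * κ') (hp : p = (1 - 2 * κ + s) / 2)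
    (hp' : p' = (1 - 2 * κ' - s) / 2) :
    a * p * (1 - p) + m * (p' - p) = 0 := by
  have hm : m = κ * a := by rw [hκ, div_mul_cancel₀ _ ha]
  rw [hp, hp', hm]
  linear_combination (-a / 4) * hs

lemma sqrt_one_sub_four_mul_lt_one_sub_two_mul {x y : ℝ} (hy : y < 0) (hxy : x + y < 1) :
    √(1 - 4 * x * y) < 1 - 2 * y := by
  rw [Real.sqrt_lt' (by linarith)]
  nlinarith [mul_pos_of_neg_of_neg hy (sub_neg.mpr hxy)]

lemma sub_lt_sqrt_one_sub_four_mul {x y : ℝ} (hxy : |x + y| < 1) :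
    x - y < √(1 - 4 * x * y) := by
  apply Real.lt_sqrt_of_sq_lt
  nlinarith [(sq_lt_one_iff_abs_lt_one (x + y)).mpr hxy]

theorem stmt_15_general (α₁ α₂ β₁ β₂ m₁ m₂ : ℝ)
    (hab : α₁ + β₁ > 0 ∧ 0 > α₂ + β₂)
    (hm₁ : m₁ > 0) (hm₂ : m₂ > 0)
    (κ₁ κ₂ : ℝ) (hκ₁ : κ₁ = m₁ / (α₁ + β₁)) (hκ₂ : κ₂ = m₂ / (α₂ + β₂))
    (hκ : |κ₁ + κ₂| < 1)
    (p₁ p₂ : ℝ)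
    (hp₁ : p₁ = (1 - 2 * κ₁ + Real.sqrt (1 - 4 * κ₁ * κ₂)) / 2)
    (hp₂ : p₂ = (1 - 2 * κ₂ - Real.sqrt (1 - 4 * κ₁ * κ₂)) / 2) :
    (0 < p₂ ∧ p₂ < p₁ ∧ p₁ < 1) ∧
    (α₁ + β₁) * p₁ * (1 - p₁) + m₁ * (p₂ - p₁) = 0 ∧
    (α₂ + β₂) * p₂ * (1 - p₂) + m₂ * (p₁ - p₂) = 0 := by
  obtain ⟨hsum_gt, hsum_lt⟩ := abs_lt.mp hκ
  have hκ₁_pos : 0 < κ₁ := hκ₁ ▸ div_pos hm₁ hab.1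
  have hκ₂_neg : κ₂ < 0 := hκ₂ ▸ div_neg_of_pos_of_neg hm₂ hab.2
  have hs : √(1 - 4 * κ₁ * κ₂) ^ 2 = 1 - 4 * κ₁ * κ₂ :=
    Real.sq_sqrt (by nlinarith [mul_neg_of_pos_of_neg hκ₁_pos hκ₂_neg])
  -- `p̂₁ < 1` is `0 < p̂₂` after relabelling the alleles, i.e. `(κ₁, κ₂) ↦ (-κ₂, -κ₁)`
  have hp₁_lt := sqrt_one_sub_four_mul_lt_one_sub_two_mul (x := -κ₂) (y := -κ₁)
    (by linarith) (by linarith)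
  rw [show 1 - 4 * -κ₂ * -κ₁ = 1 - 4 * κ₁ * κ₂ by ring] at hp₁_lt
  refine ⟨⟨?_, ?_, ?_⟩, ?_, ?_⟩
  · linarith [sqrt_one_sub_four_mul_lt_one_sub_two_mul hκ₂_neg hsum_lt]
  · linarith [sub_lt_sqrt_one_sub_four_mul hκ]
  · linarith
  · exact selection_migration_balance hab.1.ne' hκ₁ hs hp₁ hp₂
  · exact selection_migration_balance hab.2.ne hκ₂ (s := -√(1 - 4 * κ₁ * κ₂))
      (by rw [neg_sq, hs]; ring) (by rw [hp₂]; ring) (by rw [hp₁]; ring)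

theorem stmt_15 (α₁ α₂ β₁ β₂ m₁ m₂ : ℝ)
    (hα : α₁ > 0 ∧ 0 > α₂) (hβ : β₁ > 0 ∧ 0 > β₂)
    (hab : α₁ + β₁ > 0 ∧ 0 > α₂ + β₂)
    (hm₁ : m₁ > 0) (hm₂ : m₂ > 0)
    (κ₁ κ₂ : ℝ) (hκ₁ : κ₁ = m₁ / (α₁ + β₁)) (hκ₂ : κ₂ = m₂ / (α₂ + β₂))
    (hκ : |κ₁ + κ₂| < 1)
    (p₁ p₂ : ℝ)
    (hp₁ : p₁ = (1 - 2 * κ₁ + Real.sqrt (1 - 4 * κ₁ * κ₂)) / 2)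
    (hp₂ : p₂ = (1 - 2 * κ₂ - Real.sqrt (1 - 4 * κ₁ * κ₂)) / 2) :
    (0 < p₂ ∧ p₂ < p₁ ∧ p₁ < 1) ∧
    (α₁ + β₁) * p₁ * (1 - p₁) + m₁ * (p₂ - p₁) = 0 ∧
    (α₂ + β₂) * p₂ * (1 - p₂) + m₂ * (p₁ - p₂) = 0 :=
  stmt_15_general α₁ α₂ β₁ β₂ m₁ m₂ hab hm₁ hm₂ κ₁ κ₂ hκ₁ hκ₂ hκ p₁ p₂ hp₁ hp₂
end

section
/- Assume θ = α₁β₂ − α₂β₁ = 0 with α₁>0>α₂, β₁>0>β₂, |αₖ| ≤ |βₖ| for k=1,2, m₁,m₂>0, αₖ+βₖ ≠ 0, and define σₖ = mₖ/αₖ, τₖ = mₖ/βₖ, κₖ = mₖ/(αₖ+βₖ). Then σ₁+σ₂ = (β₂/α₂)(τ₁+τ₂), κ₁+κ₂ = (β₂/(α₂+β₂))(τ₁+τ₂), and exactly one of the following holds: 0 < κ₁+κ₂ < τ₁+τ₂ ≤ σ₁+σ₂, or 0 > κ₁+κ₂ > τ₁+τ₂ ≥ σ₁+σ₂, or κ₁+κ₂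 = τ₁+τ₂ = σ₁+σ₂ = 0. -/
/-!
Without genotype-environment interaction the two pairs are proportional: `βₖ = r αₖ` with
`r = β₂ / α₂ ≥ 1`. Hence, writing `s = σ₁ + σ₂`, the other two sums are `τ₁ + τ₂ = s / r` and
`κ₁ + κ₂ = s / (1 + r)`, and the three quantities are ordered according to the sign of `s`.
-/

section

variable {K : Type*} [Field K]

lemma eq_div_mul_of_mul_sub_mul_eq_zero {α₁ α₂ β₁ β₂ : K} (hα₂ : α₂ ≠ 0)
    (hθ : α₁ * β₂ - α₂ * β₁ = 0) : β₁ = β₂ / α₂ * α₁ := by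
  field_simp
  linear_combination -hθ

lemma div_mul_add_div_mul (c α₁ α₂ m₁ m₂ : K) :
    m₁ / (c * α₁) + m₂ / (c * α₂) = (m₁ / α₁ + m₂ / α₂) / c := by
  rw [div_mul_eq_div_div_swap, div_mul_eq_div_div_swap, add_div]

variable [LinearOrder K] [IsStrictOrderedRing K]

lemma div_one_add_pos_lt_div_le_self {r s : K} (hr : 1 ≤ r) (hs : 0 < s) :
    0 < s / (1 + r) ∧ s / (1 + r) < s / r ∧ s / r ≤ s :=
  ⟨by positivity,
    div_lt_div_of_pos_left hs (by positivity) (lt_one_add r),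
    div_le_self hs.le hr⟩

lemma div_one_add_div_self_trichotomy {r s : K} (hr : 1 ≤ r) :
    (0 < s / (1 + r) ∧ s / (1 + r) < s / r ∧ s / r ≤ s) ∨
    (0 > s / (1 + r) ∧ s / (1 + r) > s / r ∧ s / r ≥ s) ∨
    (s / (1 + r) = 0 ∧ s / r = 0 ∧ s = 0) := by
  rcases lt_trichotomy s 0 with hs | rfl | hs
  · obtain ⟨h₀, h₁, h₂⟩ := div_one_add_pos_lt_div_le_self hr (neg_pos.mpr hs)
    simp only [neg_div, neg_pos, neg_lt_neg_iff, neg_le_neg_iff] at h₀ h₁ h₂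
    exact Or.inr (Or.inl ⟨h₀, h₁, h₂⟩)
  · simp
  · exact Or.inl (div_one_add_pos_lt_div_le_self hr hs)

end

theorem stmt_17_general (α₁ α₂ β₁ β₂ m₁ m₂ : ℝ)
    (hα : α₁ > 0 ∧ 0 > α₂) (hβ : β₁ > 0 ∧ 0 > β₂)
    (hθ : α₁ * β₂ - α₂ * β₁ = 0)
    (h2 : |α₂| ≤ |β₂|)
    (σ₁ σ₂ τ₁ τ₂ κ₁ κ₂ : ℝ)
    (hσ₁ : σ₁ = m₁ / α₁) (hσ₂ : σ₂ = m₂ / α₂)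
    (hτ₁ : τ₁ = m₁ / β₁) (hτ₂ : τ₂ = m₂ / β₂)
    (hκ₁ : κ₁ = m₁ / (α₁ + β₁)) (hκ₂ : κ₂ = m₂ / (α₂ + β₂)) :
    σ₁ + σ₂ = (β₂ / α₂) * (τ₁ + τ₂) ∧
    κ₁ + κ₂ = (β₂ / (α₂ + β₂)) * (τ₁ + τ₂) ∧
    ((0 < κ₁ + κ₂ ∧ κ₁ + κ₂ < τ₁ + τ₂ ∧ τ₁ + τ₂ ≤ σ₁ + σ₂) ∨
     (0 > κ₁ + κ₂ ∧ κ₁ + κ₂ > τ₁ + τ₂ ∧ τ₁ + τ₂ ≥ σ₁ + σ₂) ∨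
     (κ₁ + κ₂ = 0 ∧ τ₁ + τ₂ = 0 ∧ σ₁ + σ₂ = 0)) := by
  obtain ⟨hα₁, hα₂⟩ := hα
  set r := β₂ / α₂
  have hβ₁ : β₁ = r * α₁ := eq_div_mul_of_mul_sub_mul_eq_zero hα₂.ne hθ
  have hβ₂ : β₂ = r * α₂ := (div_mul_cancel₀ β₂ hα₂.ne).symm
  have hr : 1 ≤ r := by
    rw [abs_of_neg hα₂, abs_of_neg hβ.2, neg_le_neg_iff] at h2
    exact (one_le_div_of_neg hα₂).mpr h2
  have hτ : τ₁ + τ₂ = (σ₁ + σ₂) / r := by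
    rw [hτ₁, hτ₂, hσ₁, hσ₂, hβ₁, hβ₂, div_mul_add_div_mul]
  have hκ : κ₁ + κ₂ = (σ₁ + σ₂) / (1 + r) := by
    rw [hκ₁, hκ₂, hσ₁, hσ₂, hβ₁, hβ₂, ← one_add_mul, ← one_add_mul, div_mul_add_div_mul]
  have hr₀ : r ≠ 0 := by positivity
  have hr₁ : 1 + r ≠ 0 := by positivity
  refine ⟨?_, ?_, hκ ▸ hτ ▸ div_one_add_div_self_trichotomy hr⟩
  · rw [hτ, mul_div_cancel₀ _ hr₀]
  · rw [hκ, hτ, hβ₂, ← one_add_mul, mul_div_mul_right _ _ hα₂.ne]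
    field_simp

theorem stmt_17 (α₁ α₂ β₁ β₂ m₁ m₂ : ℝ)
    (hα : α₁ > 0 ∧ 0 > α₂) (hβ : β₁ > 0 ∧ 0 > β₂)
    (hθ : α₁ * β₂ - α₂ * β₁ = 0)
    (h1 : |α₁| ≤ |β₁|) (h2 : |α₂| ≤ |β₂|)
    (hm₁ : m₁ > 0) (hm₂ : m₂ > 0)
    (hab1 : α₁ + β₁ ≠ 0) (hab2 : α₂ + β₂ ≠ 0)
    (σ₁ σ₂ τ₁ τ₂ κ₁ κ₂ : ℝ)
    (hσ₁ : σ₁ = m₁ / α₁) (hσ₂ : σ₂ = m₂ / α₂)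
    (hτ₁ : τ₁ = m₁ / β₁) (hτ₂ : τ₂ = m₂ / β₂)
    (hκ₁ : κ₁ = m₁ / (α₁ + β₁)) (hκ₂ : κ₂ = m₂ / (α₂ + β₂)) :
    σ₁ + σ₂ = (β₂ / α₂) * (τ₁ + τ₂) ∧
    κ₁ + κ₂ = (β₂ / (α₂ + β₂)) * (τ₁ + τ₂) ∧
    ((0 < κ₁ + κ₂ ∧ κ₁ + κ₂ < τ₁ + τ₂ ∧ τ₁ + τ₂ ≤ σ₁ + σ₂) ∨
     (0 > κ₁ + κ₂ ∧ κ₁ + κ₂ > τ₁ + τ₂ ∧ τ₁ + τ₂ ≥ σ₁ + σ₂) ∨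
     (κ₁ + κ₂ = 0 ∧ τ₁ + τ₂ = 0 ∧ σ₁ + σ₂ = 0)) :=
  stmt_17_general α₁ α₂ β₁ β₂ m₁ m₂ hα hβ hθ h2 σ₁ σ₂ τ₁ τ₂ κ₁ κ₂ hσ₁ hσ₂ hτ₁ hτ₂ hκ₁ hκ₂
end

section
/- In the weak-migration approximation of the fully polymorphic equilibrium, the deme-1 migration load L₁ = 2(α₁(1−p̂₁) + β₁(1−q̂₁)) equals 2m₁(α₁+β₁+2ρ)/(α₁+β₁+ρ), where p̂₁ = 1 − (m₁/α₁)·(α₁+ρ)/(α₁+β₁+ρ) and q̂₁ = 1 − (m₁/β₁)·(β₁+ρ)/(α₁+β₁+ρ). Moreover, for fixed m₁ > 0, α₁ > 0, β₁ > 0, the expression 2m₁(α₁+β₁+2ρ)/(α₁+β₁+ρ) is strictly increasing in ρ on [0,∞). -/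
theorem mul_div_add_mul_div_eq {α β m ρ : ℝ} (hα : α ≠ 0) (hβ : β ≠ 0) (hs : α + β + ρ ≠ 0) :
    α * (m / α * ((α + ρ) / (α + β + ρ))) + β * (m / β * ((β + ρ) / (α + β + ρ))) =
      m * (α + β + 2 * ρ) / (α + β + ρ) := by
  field_simp
  ring

theorem strictMonoOn_mul_add_two_mul_div_add {a c : ℝ} (ha : 0 < a) (hc : 0 < c) :
    StrictMonoOn (fun r : ℝ => c * (a + 2 * r) / (a + r)) (Set.Ioi (-a)) := by
  intro x hx y hy hxy
  simp only [Set.mem_Ioi] at hx hy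
  rw [div_lt_div_iff₀ (by linarith) (by linarith)]
  have hdiff : c * (a + 2 * y) * (a + x) - c * (a + 2 * x) * (a + y) = c * a * (y - x) := by ring
  have hpos : 0 < c * a * (y - x) := mul_pos (mul_pos hc ha) (sub_pos.mpr hxy)
  linarith

theorem stmt_18 (α₁ β₁ m₁ ρ : ℝ)
    (hα : α₁ > 0) (hβ : β₁ > 0) (hm₁ : m₁ > 0) (hρ : ρ ≥ 0)
    (p₁ q₁ : ℝ)
    (hp₁ : p₁ = 1 - (m₁ / α₁) * ((α₁ + ρ) / (α₁ + β₁ + ρ)))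
    (hq₁ : q₁ = 1 - (m₁ / β₁) * ((β₁ + ρ) / (α₁ + β₁ + ρ))) :
    2 * (α₁ * (1 - p₁) + β₁ * (1 - q₁)) = 2 * m₁ * (α₁ + β₁ + 2 * ρ) / (α₁ + β₁ + ρ) ∧
    StrictMonoOn (fun r : ℝ => 2 * m₁ * (α₁ + β₁ + 2 * r) / (α₁ + β₁ + r)) (Set.Ici 0) := by
  have hab : 0 < α₁ + β₁ := add_pos hα hβ
  constructor
  · subst hp₁ hq₁
    rw [sub_sub_cancel, sub_sub_cancel,
      mul_div_add_mul_div_eq hα.ne' hβ.ne' (by positivity : α₁ + β₁ + ρ ≠ 0)]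
    ring
  · refine (strictMonoOn_mul_add_two_mul_div_add hab (by positivity : (0 : ℝ) < 2 * m₁)).mono ?_
    intro r hr
    simp only [Set.mem_Ici, Set.mem_Ioi] at hr ⊢
    linarith
end
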